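/- arXiv:1307.1626 — 2 statements merged into one kernel-verified Lean document; each statement's English description precedes it below -/
import Mathlib

section
/- Let (T(t))_{t≥0} be a bounded C₀-semigroup on a complex Banach space X with M := sup_{t≥0}‖T(t)‖. For n ≥ 1 let R_n be the bounded operator R_n x := ∫₀^∞ e^{−ns} T(s)x ds (so R_n = (n+A)^{−1} with −A the generator). Let x, u, v ∈ X satisfy T(t)x = x − ∫₀^t T(r)u dr and T(t)u = u − ∫₀^t T(r)v dr for all t ≥ 0 (i.e. u = Ax and v = A²x). Then for all n ≥ 1 and t > 0 (Yosida approximation): ‖T(t)x − exp(−t(n·I − n²·R_n)) x‖ ≤ 16M (t/n) ‖v‖, where exp denotes the exponential of a bounded operator. -/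
open MeasureTheory Set Complex

/-!
Let `-A` generate `T`, so that `R = (ν + A)⁻¹`, `u = A x`, `v = A² x`, and let `A_ν = ν - ν² R` be
the Yosida approximation. The function `F r = exp (-(t - r) A_ν) (T r x)` interpolates between
`exp (-t A_ν) x` at `r = 0` and `T t x` at `r = t`. The resolvent identity `ν R y = y - R (A y)`,
applied to `T r x` and `T r u`, gives `A_ν (T r x) - A (T r x) = -R (T r v)`, hence
`F' r = -exp (-(t - r) A_ν) (R (T r v))`.

To bound `F'` by `M ‖v‖ / ν` with a single factor `M`, expand
`exp (-τ A_ν) = e^{-τν} ∑ (τν²)^k / k! • R^k` and estimate `R^(k+1) ∘ T r` as a whole: by the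
Laplace-transform formula `R^(k+1) = (1/k!) ∫₀^∞ σ^k e^{-νσ} T σ dσ` (induction on `k` and
Fubini), `‖R^(k+1) (T r v)‖ ≤ M ‖v‖ / ν^(k+1)`, and the series sums to `M ‖v‖ / ν`. The mean
value inequality then gives `‖T t x - exp (-t A_ν) x‖ ≤ M (t / ν) ‖v‖`.
-/

open Filter Topology
open scoped Nat

section LaplaceIntegrals

variable {E : Type*} [NormedAddCommGroup E] [NormedSpace ℝ E] {ν : ℝ}

lemma integral_pow_mul_exp_neg_mul_Ioi (hν : 0 < ν) (k : ℕ) :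
    ∫ σ in Ioi (0 : ℝ), σ ^ k * Real.exp (-(ν * σ)) = k ! / ν ^ (k + 1) := by
  have h := Real.integral_rpow_mul_exp_neg_mul_Ioi (a := k + 1) (by positivity) hν
  rw [add_sub_cancel_right, Real.Gamma_nat_eq_factorial, ← Nat.cast_succ, Real.rpow_natCast,
    one_div, inv_pow] at h
  rw [div_eq_inv_mul, ← h]
  simp [Real.rpow_natCast]

lemma integrableOn_pow_mul_exp_neg_mul_Ioi (hν : 0 < ν) (k : ℕ) :
    IntegrableOn (fun σ => σ ^ k * Real.exp (-(ν * σ))) (Ioi 0) :=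
  Integrable.of_integral_ne_zero <| by
    rw [integral_pow_mul_exp_neg_mul_Ioi hν k]; positivity

lemma integrableOn_pow_mul_exp_neg_mul_smul (hν : 0 < ν) (k : ℕ) {f : ℝ → E} {B : ℝ}
    (hf : ContinuousOn f (Ici 0)) (hB : ∀ τ, 0 ≤ τ → ‖f τ‖ ≤ B) :
    IntegrableOn (fun σ => (σ ^ k * Real.exp (-(ν * σ))) • f σ) (Ioi 0) :=
  (integrableOn_pow_mul_exp_neg_mul_Ioi hν k).smul_of_top_left <|
    memLp_top_of_bound ((hf.mono Ioi_subset_Ici_self).aestronglyMeasurable measurableSet_Ioi) B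
      (ae_restrict_of_forall_mem measurableSet_Ioi fun τ hτ => hB τ (le_of_lt hτ))

lemma norm_integral_pow_mul_exp_neg_mul_smul_le (hν : 0 < ν) (k : ℕ) {f : ℝ → E} {B : ℝ}
    (hB : ∀ τ, 0 ≤ τ → ‖f τ‖ ≤ B) :
    ‖∫ σ in Ioi 0, (σ ^ k * Real.exp (-(ν * σ))) • f σ‖ ≤ k ! / ν ^ (k + 1) * B := by
  rw [← integral_pow_mul_exp_neg_mul_Ioi hν k, ← integral_mul_const]
  refine norm_integral_le_of_norm_le ((integrableOn_pow_mul_exp_neg_mul_Ioi hν k).mul_const B)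
    (ae_restrict_of_forall_mem measurableSet_Ioi fun σ hσ => ?_)
  have hσ : (0 : ℝ) < σ := hσ
  rw [norm_smul, Real.norm_of_nonneg (by positivity)]
  exact mul_le_mul_of_nonneg_left (hB σ hσ.le) (by positivity)

lemma tendsto_exp_neg_mul_smul_atTop (hν : 0 < ν) {f : ℝ → E} {B : ℝ}
    (hB : ∀ τ, 0 ≤ τ → ‖f τ‖ ≤ B) :
    Tendsto (fun σ => Real.exp (-(ν * σ)) • f σ) atTop (𝓝 0) := by
  have hexp : Tendsto (fun σ => Real.exp (-(ν * σ)) * B) atTop (𝓝 0) := by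
    simpa using (Real.tendsto_exp_neg_atTop_nhds_zero.comp
      (tendsto_id.const_mul_atTop hν)).mul_const B
  refine squeeze_zero_norm' ?_ hexp
  filter_upwards [eventually_ge_atTop 0] with σ hσ
  rw [norm_smul, Real.norm_of_nonneg (Real.exp_pos _).le]
  exact mul_le_mul_of_nonneg_left (hB σ hσ) (Real.exp_pos _).le

lemma integral_indicator_triangle_pow_smul [CompleteSpace E] (k : ℕ) (g : ℝ → E) (τ : ℝ) :
    ∫ σ, {q : ℝ × ℝ | 0 < q.1 ∧ q.1 < q.2}.indicator (fun q => q.1 ^ k • g q.2) (σ, τ) =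
      (Ioi 0).indicator (fun x => (x ^ (k + 1) / ((k : ℝ) + 1)) • g x) τ := by
  by_cases hτ : 0 < τ
  · have hslice : (fun σ => {q : ℝ × ℝ | 0 < q.1 ∧ q.1 < q.2}.indicator
        (fun q => q.1 ^ k • g q.2) (σ, τ)) = (Ioo 0 τ).indicator (fun σ => σ ^ k • g τ) := by
      ext σ
      simp only [indicator, mem_ofPred_eq, mem_Ioo]
    rw [hslice, integral_indicator measurableSet_Ioo, integral_smul_const,
      ← integral_Ioc_eq_integral_Ioo, ← intervalIntegral.integral_of_le hτ.le, integral_pow,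
      indicator_of_mem (mem_Ioi.2 hτ)]
    simp
  · have hslice : (fun σ => {q : ℝ × ℝ | 0 < q.1 ∧ q.1 < q.2}.indicator
        (fun q => q.1 ^ k • g q.2) (σ, τ)) = 0 := by
      ext σ
      exact indicator_of_notMem (fun h => hτ (h.1.trans h.2)) _
    rw [hslice, indicator_of_notMem (show τ ∉ Ioi 0 from hτ), Pi.zero_def, integral_zero]

lemma integral_Ioi_integral_Ioi_pow_smul_add [CompleteSpace E] (k : ℕ) {g : ℝ → E}
    (hg : IntegrableOn (fun p : ℝ × ℝ => p.2 ^ k • g (p.1 + p.2)) (Ioi 0 ×ˢ Ioi 0)) :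
    ∫ ρ in Ioi 0, ∫ σ in Ioi 0, σ ^ k • g (ρ + σ) =
      ((k : ℝ) + 1)⁻¹ • ∫ τ in Ioi 0, τ ^ (k + 1) • g τ := by
  set T : Set (ℝ × ℝ) := {q | 0 < q.1 ∧ q.1 < q.2}
  set K : ℝ × ℝ → E := fun q => q.1 ^ k • g q.2
  -- the shear `(ρ, σ) ↦ (σ, ρ + σ)` maps the open quadrant onto the triangle `T`
  set sh : ℝ × ℝ ≃ᵐ ℝ × ℝ := MeasurableEquiv.prodComm.trans (MeasurableEquiv.shearAddRight ℝ)
  have hsh : MeasurePreserving sh volume volume := measurePreserving_prod_add_swap volume volume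
  have hsh_apply : ∀ p, sh p = (p.2, p.2 + p.1) := fun p => rfl
  have hKsh : K ∘ sh = fun p => p.2 ^ k • g (p.1 + p.2) := by
    ext p; simp [K, hsh_apply, add_comm]
  have hT : sh ⁻¹' T = Ioi 0 ×ˢ Ioi 0 := by
    ext p; simp [T, hsh_apply, and_comm]
  have hmT : MeasurableSet T :=
    (measurableSet_lt measurable_const measurable_fst).inter
      (measurableSet_lt measurable_fst measurable_snd)
  have hK : IntegrableOn K T := by
    rwa [← hsh.integrableOn_comp_preimage sh.measurableEmbedding, hKsh, hT]
  calc ∫ ρ in Ioi 0, ∫ σ in Ioi 0, σ ^ k • g (ρ + σ)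
      = ∫ q in T, K q := by
        rw [← setIntegral_prod _ hg, ← hT, ← hKsh]
        exact hsh.setIntegral_preimage_emb sh.measurableEmbedding K T
    _ = ∫ τ, ∫ σ, T.indicator K (σ, τ) := by
        rw [← integral_indicator hmT]
        exact integral_prod_symm _ ((integrable_indicator_iff hmT).2 hK)
    _ = ((k : ℝ) + 1)⁻¹ • ∫ τ in Ioi 0, τ ^ (k + 1) • g τ := by
        simp_rw [K, T, integral_indicator_triangle_pow_smul]
        rw [integral_indicator measurableSet_Ioi, ← integral_smul]
        simp only [smul_smul, div_eq_inv_mul]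

lemma integrableOn_pow_smul_exp_neg_mul_smul_add (hν : 0 < ν) (k : ℕ) {f : ℝ → E} {B : ℝ}
    (hf : ContinuousOn f (Ici 0)) (hB : ∀ τ, 0 ≤ τ → ‖f τ‖ ≤ B) :
    IntegrableOn (fun p : ℝ × ℝ =>
      p.2 ^ k • Real.exp (-(ν * (p.1 + p.2))) • f (p.1 + p.2)) (Ioi 0 ×ˢ Ioi 0) := by
  have hS : MeasurableSet (Ioi (0 : ℝ) ×ˢ Ioi (0 : ℝ)) := measurableSet_Ioi.prod measurableSet_Ioi
  have hdom : IntegrableOn (fun p : ℝ × ℝ => Real.exp (-(ν * p.1)) *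
      (p.2 ^ k * Real.exp (-(ν * p.2)) * B)) (Ioi 0 ×ˢ Ioi 0) := by
    have hexp : IntegrableOn (fun ρ => Real.exp (-(ν * ρ))) (Ioi 0) := by
      simpa using integrableOn_pow_mul_exp_neg_mul_Ioi hν 0
    rw [IntegrableOn, Measure.volume_eq_prod, ← Measure.prod_restrict]
    exact hexp.mul_prod ((integrableOn_pow_mul_exp_neg_mul_Ioi hν k).mul_const B)
  refine hdom.mono' (ContinuousOn.aestronglyMeasurable ?_ hS)
    (ae_restrict_of_forall_mem hS fun p hp => ?_)
  · refine (Continuous.continuousOn (by fun_prop)).smul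
      ((Continuous.continuousOn (by fun_prop)).smul
        (hf.comp continuous_add.continuousOn fun p hp => ?_))
    exact add_nonneg (mem_Ioi.1 hp.1).le (mem_Ioi.1 hp.2).le
  · obtain ⟨h1, h2⟩ : 0 < p.1 ∧ 0 < p.2 := hp
    rw [norm_smul, norm_smul, Real.norm_of_nonneg (by positivity),
      Real.norm_of_nonneg (by positivity), mul_add, neg_add, Real.exp_add]
    calc p.2 ^ k * (Real.exp (-(ν * p.1)) * Real.exp (-(ν * p.2)) * ‖f (p.1 + p.2)‖)
        ≤ p.2 ^ k * (Real.exp (-(ν * p.1)) * Real.exp (-(ν * p.2)) * B) := by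
          gcongr; exact hB _ (by positivity)
      _ = _ := by ring

lemma integral_exp_smul_integral_pow_mul_exp_smul_add [CompleteSpace E] (hν : 0 < ν) (k : ℕ)
    {f : ℝ → E} {B : ℝ} (hf : ContinuousOn f (Ici 0)) (hB : ∀ τ, 0 ≤ τ → ‖f τ‖ ≤ B) :
    ∫ ρ in Ioi 0, Real.exp (-(ν * ρ)) •
        ∫ σ in Ioi 0, (σ ^ k * Real.exp (-(ν * σ))) • f (ρ + σ) =
      ((k : ℝ) + 1)⁻¹ • ∫ τ in Ioi 0, (τ ^ (k + 1) * Real.exp (-(ν * τ))) • f τ := by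
  have h := integral_Ioi_integral_Ioi_pow_smul_add k (g := fun τ => Real.exp (-(ν * τ)) • f τ)
    (integrableOn_pow_smul_exp_neg_mul_smul_add hν k hf hB)
  simp only [smul_smul, mul_add, neg_add, Real.exp_add] at h
  simp only [← integral_smul, smul_smul, ← h]
  congr! 3 with ρ _ σ _
  ring_nf

end LaplaceIntegrals

section Exponential

variable {𝔸 : Type*} [NormedRing 𝔸] [NormedAlgebra ℝ 𝔸] [CompleteSpace 𝔸]

lemma exp_smul_one_add (c : ℝ) (b : 𝔸) :
    NormedSpace.exp (c • (1 : 𝔸) + b) = Real.exp c • NormedSpace.exp b := by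
  have hball : ∀ a : 𝔸, a ∈ Metric.eball (0 : 𝔸) (NormedSpace.expSeries ℝ 𝔸).radius := by
    simp [NormedSpace.expSeries_radius_eq_top]
  rw [NormedSpace.exp_add_of_commute_of_mem_ball (𝕂 := ℝ) ((Commute.one_left b).smul_left c)
      (hball _) (hball _), ← Algebra.algebraMap_eq_smul_one,
    ← NormedSpace.algebraMap_exp_comm, Real.exp_eq_exp_ℝ, Algebra.algebraMap_eq_smul_one,
    smul_one_mul]

variable {X : Type*} [NormedAddCommGroup X] [NormedSpace ℂ X] [CompleteSpace X]

lemma norm_exp_smul_apply_le {r : X →L[ℂ] X} {y : X} {K ν d : ℝ} (hd : 0 ≤ d)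
    (h : ∀ k : ℕ, ‖(r ^ k) y‖ ≤ K / ν ^ k) :
    ‖NormedSpace.exp (d • r) y‖ ≤ K * Real.exp (d / ν) := by
  have hseries := (ContinuousLinearMap.apply ℂ X y).hasSum
    (NormedSpace.exp_series_hasSum_exp' (𝕂 := ℝ) (d • r))
  have hreal := (NormedSpace.expSeries_div_hasSum_exp (d / ν)).mul_left K
  rw [← Real.exp_eq_exp_ℝ] at hreal
  refine hseries.norm_le_of_bounded hreal fun k => ?_
  simp only [ContinuousLinearMap.apply_apply, smul_pow,
    smul_apply, norm_smul, Real.norm_of_nonneg (by positivity : (0 : ℝ) ≤ (k ! : ℝ)⁻¹),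
    Real.norm_of_nonneg (pow_nonneg hd k)]
  calc (k ! : ℝ)⁻¹ * (d ^ k * ‖(r ^ k) y‖) ≤ (k ! : ℝ)⁻¹ * (d ^ k * (K / ν ^ k)) := by
        gcongr; exact h k
    _ = K * ((d / ν) ^ k / k !) := by ring

end Exponential

section Semigroup

variable {X : Type*} [NormedAddCommGroup X] [NormedSpace ℂ X] {T : ℝ → X →L[ℂ] X}

/-- `w = A y` for the generator `-A` of `T`, in integrated form. -/
def IsGeneratorPair (T : ℝ → X →L[ℂ] X) (y w : X) : Prop :=
  ∀ r, 0 ≤ r → T r y = y - ∫ ρ in (0 : ℝ)..r, T ρ w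

namespace IsGeneratorPair

variable {y w : X}

lemma semigroup_apply (hyw : IsGeneratorPair T y w)
    (hTadd : ∀ s t : ℝ, 0 ≤ s → 0 ≤ t → T (s + t) = (T s).comp (T t))
    (hw : ContinuousOn (fun t => T t w) (Ici 0)) {s : ℝ} (hs : 0 ≤ s) :
    IsGeneratorPair T (T s y) (T s w) := by
  intro r hr
  have hint : ∀ a b, 0 ≤ a → 0 ≤ b → IntervalIntegrable (fun ρ => T ρ w) volume a b :=
    fun a b ha hb => (hw.mono fun ρ hρ => le_trans (le_min ha hb) hρ.1).intervalIntegrable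
  have hshift : ∫ ρ in (0 : ℝ)..r, T ρ (T s w) = ∫ ρ in s..r + s, T ρ w := by
    have h := intervalIntegral.integral_comp_add_right (a := 0) (b := r) (fun ρ => T ρ w) s
    rw [zero_add] at h
    rw [← h]
    refine intervalIntegral.integral_congr fun ρ hρ => ?_
    rw [uIcc_of_le hr] at hρ
    simp [hTadd ρ s hρ.1 hs]
  rw [← ContinuousLinearMap.comp_apply, ← hTadd r s hr hs, hyw _ (add_nonneg hr hs), hyw s hs,
    hshift, ← intervalIntegral.integral_add_adjacent_intervals (hint 0 s le_rfl hs)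
      (hint s (r + s) hs (add_nonneg hr hs))]
  abel

lemma hasDerivWithinAt [CompleteSpace X] (hyw : IsGeneratorPair T y w)
    (hw : ContinuousOn (fun t => T t w) (Ici 0)) {s : ℝ} (hs : 0 ≤ s) :
    HasDerivWithinAt (fun r => T r y) (-(T s w)) (Ici 0) s := by
  have : Fact (s ∈ Icc 0 (s + 1)) := ⟨⟨hs, by linarith⟩⟩
  have hprim : HasDerivWithinAt (fun r => ∫ ρ in (0 : ℝ)..r, T ρ w) (T s w) (Icc 0 (s + 1)) s :=
    intervalIntegral.integral_hasDerivWithinAt_right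
      ((hw.mono fun ρ hρ => by simp_all).intervalIntegrable)
      ((hw.mono Icc_subset_Ici_self).stronglyMeasurableAtFilter_nhdsWithin measurableSet_Icc s)
      ((hw s hs).mono Icc_subset_Ici_self)
  refine ((hprim.const_sub y).congr_of_mem (fun r hr => hyw r hr.1) ⟨hs, by linarith⟩)
    |>.mono_of_mem_nhdsWithin ?_
  rw [← Ici_inter_Iic]
  exact inter_mem_nhdsWithin _ (Iic_mem_nhds (by linarith))

lemma apply_zero (hyw : IsGeneratorPair T y w) : T 0 y = y := by
  simpa using hyw 0 le_rfl

lemma smul_resolvent_apply [CompleteSpace X] (hyw : IsGeneratorPair T y w)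
    (hTcont : ∀ x : X, ContinuousOn (fun t => T t x) (Ici 0)) {M : ℝ}
    (hM : ∀ t : ℝ, 0 ≤ t → ‖T t‖ ≤ M) {ν : ℝ} (hν : 0 < ν) {R : X →L[ℂ] X}
    (hR : ∀ y : X, R y = ∫ s in Ioi (0 : ℝ), Real.exp (-(ν * s)) • T s y) :
    ν • R y = y - R w := by
  have hint : ∀ z, IntegrableOn (fun σ => Real.exp (-(ν * σ)) • T σ z) (Ioi 0) := fun z => by
    simpa using integrableOn_pow_mul_exp_neg_mul_smul hν 0 (hTcont z)
      fun τ hτ => (T τ).le_of_opNorm_le (hM τ hτ) z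
  have hderiv : ∀ σ ∈ Ioi (0 : ℝ), HasDerivAt (fun σ => Real.exp (-(ν * σ)) • T σ y)
      (-(ν • Real.exp (-(ν * σ)) • T σ y + Real.exp (-(ν * σ)) • T σ w)) σ := by
    intro σ hσ
    have hexp := ((hasDerivAt_id' σ).const_mul ν).neg.exp
    have horbit := (hyw.hasDerivWithinAt (hTcont w) (le_of_lt hσ)).hasDerivAt (Ici_mem_nhds hσ)
    refine (hexp.smul horbit).congr_deriv ?_
    module
  have hFTC := integral_Ioi_of_hasDerivAt_of_tendsto
    (f := fun σ => Real.exp (-(ν * σ)) • T σ y)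
    ((Real.continuous_exp.comp (by fun_prop)).continuousWithinAt.smul (hTcont y 0 self_mem_Ici))
    hderiv ((((hint y).smul ν).add (hint w)).neg)
    (tendsto_exp_neg_mul_smul_atTop hν fun τ hτ => (T τ).le_of_opNorm_le (hM τ hτ) y)
  rw [integral_neg, integral_add (f := fun σ => ν • Real.exp (-(ν * σ)) • T σ y)
    ((hint y).smul ν) (hint w), integral_smul, ← hR, ← hR, mul_zero, neg_zero, Real.exp_zero,
    one_smul, hyw.apply_zero, zero_sub, neg_inj] at hFTC
  exact eq_sub_of_add_eq hFTC

end IsGeneratorPair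

/-- The Yosida approximation `ν A (ν + A)⁻¹ = ν - ν² (ν + A)⁻¹`, written with `R = (ν + A)⁻¹`. -/
noncomputable def yosidaApprox (ν : ℝ) (R : X →L[ℂ] X) : X →L[ℂ] X := ν • 1 - ν ^ 2 • R

variable [CompleteSpace X] {M ν : ℝ} {R : X →L[ℂ] X} {x u v : X}

lemma resolvent_pow_succ_apply
    (hTadd : ∀ s t : ℝ, 0 ≤ s → 0 ≤ t → T (s + t) = (T s).comp (T t))
    (hTcont : ∀ x : X, ContinuousOn (fun t => T t x) (Ici 0))
    (hM : ∀ t : ℝ, 0 ≤ t → ‖T t‖ ≤ M) (hν : 0 < ν)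
    (hR : ∀ y : X, R y = ∫ s in Ioi (0 : ℝ), Real.exp (-(ν * s)) • T s y) (k : ℕ) (y : X) :
    (R ^ (k + 1)) y = (k ! : ℝ)⁻¹ • ∫ σ in Ioi (0 : ℝ), (σ ^ k * Real.exp (-(ν * σ))) • T σ y := by
  induction k generalizing y with
  | zero => simp [hR]
  | succ k ih =>
    have hbound : ∀ τ, 0 ≤ τ → ‖T τ y‖ ≤ M * ‖y‖ := fun τ hτ => (T τ).le_of_opNorm_le (hM τ hτ) y
    have hshift : ∀ ρ ∈ Ioi (0 : ℝ),
        Real.exp (-(ν * ρ)) • T ρ (∫ σ in Ioi (0 : ℝ), (σ ^ k * Real.exp (-(ν * σ))) • T σ y) =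
          Real.exp (-(ν * ρ)) •
            ∫ σ in Ioi (0 : ℝ), (σ ^ k * Real.exp (-(ν * σ))) • T (ρ + σ) y := by
      intro ρ hρ
      rw [← (T ρ).integral_comp_comm (integrableOn_pow_mul_exp_neg_mul_smul hν k (hTcont y) hbound)]
      congr 1
      refine setIntegral_congr_fun measurableSet_Ioi fun σ hσ => ?_
      rw [ContinuousLinearMap.map_smul_of_tower, hTadd ρ σ (le_of_lt hρ) (le_of_lt hσ),
        ContinuousLinearMap.comp_apply]
    rw [pow_succ', mul_apply_eq_comp, ih, ContinuousLinearMap.map_smul_of_tower, hR,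
      setIntegral_congr_fun measurableSet_Ioi hshift,
      integral_exp_smul_integral_pow_mul_exp_smul_add hν k (hTcont y) hbound, smul_smul,
      Nat.factorial_succ, Nat.cast_mul, mul_inv, Nat.cast_succ, mul_comm]

lemma norm_resolvent_pow_succ_apply_le
    (hTadd : ∀ s t : ℝ, 0 ≤ s → 0 ≤ t → T (s + t) = (T s).comp (T t))
    (hTcont : ∀ x : X, ContinuousOn (fun t => T t x) (Ici 0))
    (hM : ∀ t : ℝ, 0 ≤ t → ‖T t‖ ≤ M) (hν : 0 < ν)
    (hR : ∀ y : X, R y = ∫ s in Ioi (0 : ℝ), Real.exp (-(ν * s)) • T s y) (k : ℕ) {s : ℝ}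
    (hs : 0 ≤ s) (y : X) :
    ‖(R ^ (k + 1)) (T s y)‖ ≤ M * ‖y‖ / ν ^ (k + 1) := by
  have hbound : ∀ τ, 0 ≤ τ → ‖T τ (T s y)‖ ≤ M * ‖y‖ := fun τ hτ => by
    rw [← ContinuousLinearMap.comp_apply, ← hTadd τ s hτ hs]
    exact (T _).le_of_opNorm_le (hM _ (add_nonneg hτ hs)) y
  rw [resolvent_pow_succ_apply hTadd hTcont hM hν hR, norm_smul,
    Real.norm_of_nonneg (by positivity)]
  calc (k ! : ℝ)⁻¹ * ‖∫ σ in Ioi (0 : ℝ), (σ ^ k * Real.exp (-(ν * σ))) • T σ (T s y)‖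
      ≤ (k ! : ℝ)⁻¹ * (k ! / ν ^ (k + 1) * (M * ‖y‖)) := by
        gcongr; exact norm_integral_pow_mul_exp_neg_mul_smul_le hν k hbound
    _ = M * ‖y‖ / ν ^ (k + 1) := by field_simp

lemma norm_exp_neg_smul_yosidaApprox_apply_le
    (hTadd : ∀ s t : ℝ, 0 ≤ s → 0 ≤ t → T (s + t) = (T s).comp (T t))
    (hTcont : ∀ x : X, ContinuousOn (fun t => T t x) (Ici 0))
    (hM : ∀ t : ℝ, 0 ≤ t → ‖T t‖ ≤ M) (hν : 0 < ν)
    (hR : ∀ y : X, R y = ∫ s in Ioi (0 : ℝ), Real.exp (-(ν * s)) • T s y) {τ s : ℝ}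
    (hτ : 0 ≤ τ) (hs : 0 ≤ s) (y : X) :
    ‖NormedSpace.exp ((-τ) • yosidaApprox ν R) (R (T s y))‖ ≤ M * ‖y‖ / ν := by
  have hsplit : (-τ) • yosidaApprox ν R = (-(τ * ν)) • (1 : X →L[ℂ] X) + (τ * ν ^ 2) • R := by
    simp only [yosidaApprox, smul_sub, smul_smul]
    module
  have hpow : ∀ k : ℕ, ‖(R ^ k) (R (T s y))‖ ≤ M * ‖y‖ / ν / ν ^ k := fun k => by
    rw [← mul_apply_eq_comp, ← pow_succ, div_div, ← pow_succ']
    exact norm_resolvent_pow_succ_apply_le hTadd hTcont hM hν hR k hs y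
  rw [hsplit, exp_smul_one_add, smul_apply, norm_smul,
    Real.norm_of_nonneg (Real.exp_pos _).le]
  calc Real.exp (-(τ * ν)) * ‖NormedSpace.exp ((τ * ν ^ 2) • R) (R (T s y))‖
      ≤ Real.exp (-(τ * ν)) * (M * ‖y‖ / ν * Real.exp (τ * ν ^ 2 / ν)) := by
        gcongr; exact norm_exp_smul_apply_le (by positivity) hpow
    _ = M * ‖y‖ / ν := by
        rw [show τ * ν ^ 2 / ν = τ * ν by field_simp, mul_left_comm, ← Real.exp_add,
          neg_add_cancel, Real.exp_zero, mul_one]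

lemma IsGeneratorPair.yosidaApprox_apply_sub (hxu : IsGeneratorPair T x u)
    (huv : IsGeneratorPair T u v) (hTcont : ∀ x : X, ContinuousOn (fun t => T t x) (Ici 0))
    (hM : ∀ t : ℝ, 0 ≤ t → ‖T t‖ ≤ M) (hν : 0 < ν)
    (hR : ∀ y : X, R y = ∫ s in Ioi (0 : ℝ), Real.exp (-(ν * s)) • T s y) :
    yosidaApprox ν R x - u = -R v := by
  have hx := hxu.smul_resolvent_apply hTcont hM hν hR
  have hu := huv.smul_resolvent_apply hTcont hM hν hR
  calc yosidaApprox ν R x - u = ν • x - ν • (ν • R x) - u := by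
        simp [yosidaApprox, smul_smul, sq]
    _ = -R v := by rw [hx, smul_sub, hu]; abel

lemma hasDerivWithinAt_exp_yosidaApprox_apply
    (hTadd : ∀ s t : ℝ, 0 ≤ s → 0 ≤ t → T (s + t) = (T s).comp (T t))
    (hTcont : ∀ x : X, ContinuousOn (fun t => T t x) (Ici 0))
    (hM : ∀ t : ℝ, 0 ≤ t → ‖T t‖ ≤ M) (hν : 0 < ν)
    (hR : ∀ y : X, R y = ∫ s in Ioi (0 : ℝ), Real.exp (-(ν * s)) • T s y)
    (hxu : IsGeneratorPair T x u) (huv : IsGeneratorPair T u v) (t : ℝ) {s : ℝ} (hs : 0 ≤ s) :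
    HasDerivWithinAt (fun r => NormedSpace.exp ((r - t) • yosidaApprox ν R) (T r x))
      (-NormedSpace.exp ((s - t) • yosidaApprox ν R) (R (T s v))) (Ici 0) s := by
  set A := yosidaApprox ν R
  have hexp : HasDerivAt (fun r : ℝ => NormedSpace.exp ((r - t) • A))
      (NormedSpace.exp ((s - t) • A) * A) s := by
    exact ((hasDerivAt_exp_smul_const (𝕂 := ℝ) A (s - t)).scomp s
      ((hasDerivAt_id' s).sub_const t)).congr_deriv (one_smul ℝ _)
  have hgen : A (T s x) - T s u = -R (T s v) :=
    (hxu.semigroup_apply hTadd (hTcont u) hs).yosidaApprox_apply_sub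
      (huv.semigroup_apply hTadd (hTcont v) hs) hTcont hM hν hR
  -- evaluation `(L, z) ↦ L z` is only `ℝ`-bilinear on `(X →L[ℂ] X) × X`
  refine ((ContinuousLinearMap.restrictScalarsL ℂ X X ℝ ℝ).hasDerivWithinAt_of_bilinear
    hexp.hasDerivWithinAt (hxu.hasDerivWithinAt (hTcont u) hs)).congr_deriv ?_
  change NormedSpace.exp ((s - t) • A) (-T s u) + (NormedSpace.exp ((s - t) • A) * A) (T s x) =
    -NormedSpace.exp ((s - t) • A) (R (T s v))
  rw [mul_apply_eq_comp, ← map_add, ← map_neg (NormedSpace.exp ((s - t) • A)), ← hgen,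
    neg_add_eq_sub]

lemma norm_semigroup_sub_exp_yosidaApprox_apply_le
    (hTadd : ∀ s t : ℝ, 0 ≤ s → 0 ≤ t → T (s + t) = (T s).comp (T t))
    (hTcont : ∀ x : X, ContinuousOn (fun t => T t x) (Ici 0))
    (hM : ∀ t : ℝ, 0 ≤ t → ‖T t‖ ≤ M) (hν : 0 < ν)
    (hR : ∀ y : X, R y = ∫ s in Ioi (0 : ℝ), Real.exp (-(ν * s)) • T s y)
    (hxu : IsGeneratorPair T x u) (huv : IsGeneratorPair T u v) {t : ℝ} (ht : 0 ≤ t) :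
    ‖T t x - NormedSpace.exp ((-t) • yosidaApprox ν R) x‖ ≤ M * ‖v‖ / ν * t := by
  have hderiv := fun s (hs : 0 ≤ s) =>
    hasDerivWithinAt_exp_yosidaApprox_apply hTadd hTcont hM hν hR hxu huv t hs
  have hmvt := norm_image_sub_le_of_norm_deriv_right_le_segment
    (fun s hs => (hderiv s hs.1).continuousWithinAt.mono Icc_subset_Ici_self)
    (fun s hs => (hderiv s hs.1).mono (Ici_subset_Ici.2 hs.1))
    (fun s hs => by
      rw [norm_neg, show s - t = -(t - s) by ring]
      exact norm_exp_neg_smul_yosidaApprox_apply_le hTadd hTcont hM hν hR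
        (sub_nonneg.2 hs.2.le) hs.1 v) t ⟨ht, le_rfl⟩
  simpa [hxu.apply_zero] using hmvt

end Semigroup

theorem statement9_general {X : Type*} [NormedAddCommGroup X] [NormedSpace ℂ X] [CompleteSpace X]
    (T : ℝ → X →L[ℂ] X) (M : ℝ)
    (hTadd : ∀ s t : ℝ, 0 ≤ s → 0 ≤ t → T (s + t) = (T s).comp (T t))
    (hTcont : ∀ x : X, ContinuousOn (fun t => T t x) (Ici 0))
    (hM : ∀ t : ℝ, 0 ≤ t → ‖T t‖ ≤ M)
    (n : ℕ) (hn : 1 ≤ n)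
    (Rn : X →L[ℂ] X)
    (hRn : ∀ y : X, Rn y = ∫ s in Ioi (0:ℝ), Real.exp (-((n:ℝ) * s)) • T s y)
    (x u v : X)
    (hxu : ∀ r : ℝ, 0 ≤ r → T r x = x - ∫ ρ in (0:ℝ)..r, T ρ u)
    (huv : ∀ r : ℝ, 0 ≤ r → T r u = u - ∫ ρ in (0:ℝ)..r, T ρ v)
    (t : ℝ) (ht : 0 < t) :
    ‖T t x - (NormedSpace.exp
        ((-t) • ((n:ℝ) • (1 : X →L[ℂ] X) - ((n:ℝ) ^ 2) • Rn))) x‖ ≤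
      16 * M * (t / n) * ‖v‖ := by
  have hν : (0 : ℝ) < n := by exact_mod_cast hn
  have hM0 : 0 ≤ M := (norm_nonneg _).trans (hM 0 le_rfl)
  calc _ ≤ M * ‖v‖ / n * t :=
        norm_semigroup_sub_exp_yosidaApprox_apply_le hTadd hTcont hM hν hRn hxu huv ht.le
    _ = M * (t / n) * ‖v‖ := by ring
    _ ≤ 16 * M * (t / n) * ‖v‖ := by
        have : 0 ≤ M * (t / n) * ‖v‖ := by positivity
        linarith

/-- Rate in Yosida's approximation on `dom(A²)`: for a bounded `C₀`-semigroup `T` with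
`sup ‖T(t)‖ ≤ M`, with resolvent `R_n x = ∫₀^∞ e^(-ns) T(s)x ds = (n+A)^(-1)x`, and
`x ∈ dom(A²)` (witnessed by `u = Ax`, `v = A²x`),
`‖T(t)x - exp(-t(n·I - n²·R_n))x‖ ≤ 16M(t/n)‖v‖`. -/
theorem statement9 {X : Type*} [NormedAddCommGroup X] [NormedSpace ℂ X] [CompleteSpace X]
    (T : ℝ → X →L[ℂ] X) (M : ℝ)
    (hT0 : T 0 = 1)
    (hTadd : ∀ s t : ℝ, 0 ≤ s → 0 ≤ t → T (s + t) = (T s).comp (T t))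
    (hTcont : ∀ x : X, ContinuousOn (fun t => T t x) (Ici 0))
    (hM : ∀ t : ℝ, 0 ≤ t → ‖T t‖ ≤ M)
    (n : ℕ) (hn : 1 ≤ n)
    (Rn : X →L[ℂ] X)
    (hRn : ∀ y : X, Rn y = ∫ s in Ioi (0:ℝ), Real.exp (-((n:ℝ) * s)) • T s y)
    (x u v : X)
    (hxu : ∀ r : ℝ, 0 ≤ r → T r x = x - ∫ ρ in (0:ℝ)..r, T ρ u)
    (huv : ∀ r : ℝ, 0 ≤ r → T r u = u - ∫ ρ in (0:ℝ)..r, T ρ v)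
    (t : ℝ) (ht : 0 < t) :
    ‖T t x - (NormedSpace.exp
        ((-t) • ((n:ℝ) • (1 : X →L[ℂ] X) - ((n:ℝ) ^ 2) • Rn))) x‖ ≤
      16 * M * (t / n) * ‖v‖ :=
  statement9_general T M hTadd hTcont hM n hn Rn hRn x u v hxu huv t ht
end

section
/- Let (T(t))_{t≥0} be a bounded analytic C₀-semigroup on a complex Banach space X, encoded by: sup_{t≥0}‖T(t)‖ ≤ M₀, and a family (D(t))_{t>0} of bounded operators such that for every x ∈ X the map t ↦ T(t)x is differentiable on (0,∞) with derivative −D(t)x, and sup_{t>0} t‖D(t)‖ ≤ M₁. Let φ ∈ Φ with second-moment σ² = |φ″(0+)| and let (ν_t)_{t≥0} be the corresponding subordination measures. Then for every t > 0 and every x, u ∈ X with T(r)x = x − ∫₀^r T(ρ)u dρ for all r ≥ 0 (i.e. u = Ax): ‖T(t)x − ∫₀^∞ T(s)x dν_t(s)‖ ≤ (2M₀ + M₁) σ² ‖u‖. -/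
open MeasureTheory Set Complex
open Filter Topology
open scoped Interval

/-!
Let `P` be `ν_t` restricted to `[0, ∞)`. Its Laplace transform is `e^{-tφ}`, and `φ ∈ Φ` gives
`0 ≤ φ(z) ≤ z` and `z - φ(z) ≤ σ² z² / 2`. Expanding `e^{-tφ(z)}` to second order as `z → 0`
(Fatou's lemma for the difference quotients of `e^{-zs}`) shows that `P` is a probability
measure with mean `t` and variance at most `tσ²`.

Since `d/dr T(r)x = -T(r)u`, the Taylor remainder `R(s) = T(t)x - T(s)x - (s - t) T(t)u` equals
`∫_t^s (T(ρ)u - T(t)u) dρ`. Boundedness and analyticity give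
`‖T(ρ)u - T(t)u‖ ≤ 2(2M₀ + M₁)‖u‖ |ρ - t| / t`, hence `‖R(s)‖ ≤ (2M₀ + M₁)‖u‖ (s - t)² / t`.
As `P` has mean `t`, `T(t)x - ∫ T(s)x dP(s) = ∫ R dP`, which is bounded by
`(2M₀ + M₁)‖u‖ Var(P) / t ≤ (2M₀ + M₁) σ² ‖u‖`.
-/

theorem Real.exp_neg_le_one_sub_add_sq_div_two {x : ℝ} (hx : 0 ≤ x) :
    Real.exp (-x) ≤ 1 - x + x ^ 2 / 2 := by
  refine image_le_of_deriv_right_le_deriv_boundary (a := 0) (b := x)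
    (f := fun y ↦ Real.exp (-y)) (f' := fun y ↦ -Real.exp (-y))
    (B := fun y ↦ 1 - y + y ^ 2 / 2) (B' := fun y ↦ y - 1)
    (by fun_prop) (fun y _ ↦ ?_) (by simp) (by fun_prop) (fun y _ ↦ ?_) (fun y _ ↦ ?_) ⟨hx, le_rfl⟩
  · exact (hasDerivAt_neg' y).exp.hasDerivWithinAt.congr_deriv (by ring)
  · exact (((hasDerivAt_id y).const_sub 1).add ((hasDerivAt_pow 2 y).div_const 2))
      |>.hasDerivWithinAt.congr_deriv (by push_cast; ring)
  · linarith [Real.one_sub_le_exp_neg y]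

theorem Real.one_sub_add_sq_div_two_sub_cube_div_six_le_exp_neg {x : ℝ} (hx : 0 ≤ x) :
    1 - x + x ^ 2 / 2 - x ^ 3 / 6 ≤ Real.exp (-x) := by
  refine image_le_of_deriv_right_le_deriv_boundary (a := 0) (b := x)
    (f := fun y ↦ 1 - y + y ^ 2 / 2 - y ^ 3 / 6) (f' := fun y ↦ y - 1 - y ^ 2 / 2)
    (B := fun y ↦ Real.exp (-y)) (B' := fun y ↦ -Real.exp (-y))
    (by fun_prop) (fun y _ ↦ ?_) (by simp) (by fun_prop) (fun y _ ↦ ?_) (fun y hy ↦ ?_) ⟨hx, le_rfl⟩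
  · exact ((((hasDerivAt_id y).const_sub 1).add ((hasDerivAt_pow 2 y).div_const 2)).sub
      ((hasDerivAt_pow 3 y).div_const 6)).hasDerivWithinAt.congr_deriv (by push_cast; ring)
  · exact (hasDerivAt_neg' y).exp.hasDerivWithinAt.congr_deriv (by ring)
  · linarith [Real.exp_neg_le_one_sub_add_sq_div_two hy.1]

theorem integrable_and_integral_le_of_tendsto {μ : Measure ℝ} {G : ℕ → ℝ → ℝ} {f : ℝ → ℝ}
    {C : ℝ} (hGf : ∀ᵐ x ∂μ, Tendsto (fun n ↦ G n x) atTop (𝓝 (f x)))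
    (hG : ∀ n, Integrable (G n) μ) (hG0 : ∀ n, 0 ≤ᵐ[μ] G n)
    (hC : ∀ n, ∫ x, G n x ∂μ ≤ C) :
    Integrable f μ ∧ ∫ x, f x ∂μ ≤ C := by
  have hC0 : 0 ≤ C := (integral_nonneg_of_ae (hG0 0)).trans (hC 0)
  have hbound : ∀ n, ∫⁻ x, ‖G n x‖ₑ ∂μ ≤ ENNReal.ofReal C := fun n ↦ by
    rw [← ofReal_integral_norm_eq_lintegral_enorm (hG n)]
    refine ENNReal.ofReal_le_ofReal (le_of_eq_of_le (integral_congr_ae ?_) (hC n))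
    filter_upwards [hG0 n] with x hx using Real.norm_of_nonneg hx
  have hfatou : ∫⁻ x, ‖f x‖ₑ ∂μ ≤ ENNReal.ofReal C :=
    (lintegral_enorm_le_liminf_of_tendsto hGf fun n ↦ (hG n).1.enorm).trans
      ((liminf_le_liminf (Eventually.of_forall hbound)).trans_eq (liminf_const _))
  have hf : Integrable f μ :=
    ⟨aestronglyMeasurable_of_tendsto_ae _ (fun n ↦ (hG n).1) hGf,
      hfatou.trans_lt ENNReal.ofReal_lt_top⟩
  refine ⟨hf, (integral_mono hf hf.norm fun x ↦ Real.le_norm_self (f x)).trans ?_⟩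
  rw [integral_norm_eq_lintegral_enorm hf.1]
  exact ENNReal.toReal_le_of_le_ofReal hC0 hfatou

theorem tendsto_of_sub_mul_le_of_le {z F : ℕ → ℝ} {a c : ℝ} (hz : Tendsto z atTop (𝓝 0))
    (hlow : ∀ n, a - z n * c ≤ F n) (hup : ∀ n, F n ≤ a) : Tendsto F atTop (𝓝 a) :=
  tendsto_of_tendsto_of_tendsto_of_le_of_le (by simpa using (hz.mul_const c).const_sub a)
    tendsto_const_nhds hlow hup

noncomputable def bernsteinFunction (b : ℝ) (μ : Measure ℝ) (z : ℝ) : ℝ :=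
  b * z + ∫ s in Ioi 0, (1 - Real.exp (-(z * s))) ∂μ

section Bernstein

variable {b : ℝ} {μ : Measure ℝ} {z : ℝ}

theorem integrableOn_one_sub_exp_neg_mul (hμ1 : IntegrableOn (fun s : ℝ ↦ s) (Ioi 0) μ)
    (hz : 0 ≤ z) : IntegrableOn (fun s ↦ 1 - Real.exp (-(z * s))) (Ioi 0) μ := by
  refine (hμ1.const_mul z).mono' (by fun_prop : Continuous _).aestronglyMeasurable ?_
  filter_upwards [ae_restrict_mem measurableSet_Ioi] with s hs
  have hzs : 0 ≤ z * s := mul_nonneg hz (le_of_lt hs)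
  rw [Real.norm_of_nonneg (by linarith [Real.exp_le_one_iff.2 (neg_nonpos.2 hzs)])]
  linarith [Real.one_sub_le_exp_neg (z * s)]

theorem bernsteinFunction_nonneg (hb : 0 ≤ b) (hz : 0 ≤ z) : 0 ≤ bernsteinFunction b μ z :=
  add_nonneg (mul_nonneg hb hz) (setIntegral_nonneg measurableSet_Ioi fun s hs ↦ by
    linarith [Real.exp_le_one_iff.2 (neg_nonpos.2 (mul_nonneg hz (le_of_lt hs)))])

theorem bernsteinFunction_le (hμ1 : IntegrableOn (fun s : ℝ ↦ s) (Ioi 0) μ)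
    (hmom : b + ∫ s in Ioi 0, s ∂μ = 1) (hz : 0 ≤ z) : bernsteinFunction b μ z ≤ z := by
  have h : ∫ s in Ioi 0, (1 - Real.exp (-(z * s))) ∂μ ≤ ∫ s in Ioi 0, z * s ∂μ :=
    setIntegral_mono_on (integrableOn_one_sub_exp_neg_mul hμ1 hz) (hμ1.const_mul z)
      measurableSet_Ioi fun s _ ↦ by linarith [Real.one_sub_le_exp_neg (z * s)]
  rw [integral_const_mul] at h
  rw [bernsteinFunction]
  linear_combination h + z * hmom

theorem sub_bernsteinFunction_le (hμ1 : IntegrableOn (fun s : ℝ ↦ s) (Ioi 0) μ)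
    (hμ2 : IntegrableOn (fun s : ℝ ↦ s ^ 2) (Ioi 0) μ) (hmom : b + ∫ s in Ioi 0, s ∂μ = 1)
    (hz : 0 ≤ z) : z - bernsteinFunction b μ z ≤ (∫ s in Ioi 0, s ^ 2 ∂μ) / 2 * z ^ 2 := by
  have h : ∫ s in Ioi 0, (z * s - (1 - Real.exp (-(z * s)))) ∂μ ≤
      ∫ s in Ioi 0, z ^ 2 / 2 * s ^ 2 ∂μ :=
    setIntegral_mono_on ((hμ1.const_mul z).sub (integrableOn_one_sub_exp_neg_mul hμ1 hz))
      (hμ2.const_mul _) measurableSet_Ioi fun s hs ↦ by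
      nlinarith [Real.exp_neg_le_one_sub_add_sq_div_two (mul_nonneg hz (le_of_lt hs))]
  rw [integral_sub (hμ1.const_mul z) (integrableOn_one_sub_exp_neg_mul hμ1 hz),
    integral_const_mul, integral_const_mul] at h
  rw [bernsteinFunction]
  linear_combination h - z * hmom

theorem integral_exp_neg_mul_eq_of_complex {P : Measure ℝ} {t : ℝ}
    (h : ∫ s, cexp (-(z : ℂ) * s) ∂P =
      cexp (-(t : ℂ) * ((b : ℂ) * z + ∫ s in Ioi 0, (1 - cexp (-(z : ℂ) * s)) ∂μ))) :
    ∫ s, Real.exp (-(z * s)) ∂P = Real.exp (-(t * bernsteinFunction b μ z)) := by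
  have hexp : ∀ s : ℝ, cexp (-(z : ℂ) * s) = ((Real.exp (-(z * s)) : ℝ) : ℂ) := fun s ↦ by
    push_cast; ring_nf
  have hsub : ∀ s : ℝ, 1 - cexp (-(z : ℂ) * s) = ((1 - Real.exp (-(z * s)) : ℝ) : ℂ) := fun s ↦ by
    rw [hexp, ofReal_sub, ofReal_one]
  have hcast : ∀ (ν : Measure ℝ) (f : ℝ → ℝ), ∫ s, (f s : ℂ) ∂ν = ((∫ s, f s ∂ν : ℝ) : ℂ) :=
    fun _ _ ↦ integral_ofReal
  simp_rw [hsub, hexp] at h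
  rw [hcast, hcast] at h
  rw [bernsteinFunction, neg_mul_eq_neg_mul]
  exact_mod_cast h

end Bernstein

section Laplace

variable {P : Measure ℝ}

theorem isProbabilityMeasure_of_integral_one (h : ∫ _, (1 : ℝ) ∂P = 1) :
    IsProbabilityMeasure P := by
  rw [integral_const, smul_eq_mul, mul_one, measureReal_def, ENNReal.toReal_eq_one_iff] at h
  exact ⟨h⟩

theorem integrable_exp_neg_mul [IsFiniteMeasure P] (hP : ∀ᵐ s ∂P, 0 ≤ s) {z : ℝ} (hz : 0 ≤ z) :
    Integrable (fun s ↦ Real.exp (-(z * s))) P := by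
  refine (integrable_const 1).mono' (by fun_prop : Continuous _).aestronglyMeasurable ?_
  filter_upwards [hP] with s hs
  rw [Real.norm_of_nonneg (Real.exp_pos _).le, Real.exp_le_one_iff, neg_nonpos]
  exact mul_nonneg hz hs

theorem integrable_id_and_integral_id_eq_of_laplace [IsProbabilityMeasure P] {φ : ℝ → ℝ}
    {t σ2 : ℝ} (ht : 0 ≤ t) (hP : ∀ᵐ s ∂P, 0 ≤ s) (hφ0 : ∀ z, 0 ≤ z → 0 ≤ φ z)
    (hφz : ∀ z, 0 ≤ z → φ z ≤ z) (hφσ : ∀ z, 0 ≤ z → z - φ z ≤ σ2 / 2 * z ^ 2)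
    (hL : ∀ z, 0 ≤ z → ∫ s, Real.exp (-(z * s)) ∂P = Real.exp (-(t * φ z))) :
    Integrable (fun s ↦ s) P ∧ ∫ s, s ∂P = t := by
  set z : ℕ → ℝ := fun n ↦ 1 / ((n : ℝ) + 1)
  have hz : ∀ n, 0 < z n := fun n ↦ by positivity
  have hz0 : Tendsto z atTop (𝓝 0) := tendsto_one_div_add_atTop_nhds_zero_nat
  set F : ℕ → ℝ → ℝ := fun n s ↦ (1 - Real.exp (-(z n * s))) / z n
  have hF_le : ∀ n s, F n s ≤ s := fun n s ↦ by
    rw [div_le_iff₀ (hz n)]; linarith [Real.one_sub_le_exp_neg (z n * s)]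
  have hF_ge : ∀ n s, 0 ≤ s → s - z n * (s ^ 2 / 2) ≤ F n s := fun n s hs ↦ by
    rw [le_div_iff₀ (hz n)]
    nlinarith [Real.exp_neg_le_one_sub_add_sq_div_two (mul_nonneg (hz n).le hs)]
  have hF0 : ∀ n, 0 ≤ᵐ[P] F n := fun n ↦ by
    filter_upwards [hP] with s hs
    have hexp : Real.exp (-(z n * s)) ≤ 1 :=
      Real.exp_le_one_iff.2 (neg_nonpos.2 (mul_nonneg (hz n).le hs))
    exact div_nonneg (by linarith) (hz n).le
  have hF_int : ∀ n, Integrable (F n) P := fun n ↦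
    ((integrable_const 1).sub (integrable_exp_neg_mul hP (hz n).le)).div_const _
  have hF_eq : ∀ n, ∫ s, F n s ∂P = (1 - Real.exp (-(t * φ (z n)))) / z n := fun n ↦ by
    rw [integral_div, integral_sub (integrable_const 1) (integrable_exp_neg_mul hP (hz n).le),
      hL _ (hz n).le, integral_const, probReal_univ, one_smul]
  have hy : ∀ n, t * (z n - σ2 / 2 * z n ^ 2) ≤ t * φ (z n) ∧ t * φ (z n) ≤ t * z n := fun n ↦
    ⟨by gcongr; linarith [hφσ _ (hz n).le], by gcongr; exact hφz _ (hz n).le⟩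
  have hF_up : ∀ n, ∫ s, F n s ∂P ≤ t := fun n ↦ by
    rw [hF_eq, div_le_iff₀ (hz n)]
    linarith [Real.one_sub_le_exp_neg (t * φ (z n)), (hy n).2]
  have hF_low : ∀ n, t - z n * ((t * σ2 + t ^ 2) / 2) ≤ ∫ s, F n s ∂P := fun n ↦ by
    have hy0 : 0 ≤ t * φ (z n) := mul_nonneg ht (hφ0 _ (hz n).le)
    rw [hF_eq, le_div_iff₀ (hz n)]
    nlinarith [Real.exp_neg_le_one_sub_add_sq_div_two hy0, hy n]
  -- Fatou gives `∫ s ≤ t`; conversely `∫ s ≥ ∫ F n ≥ t - O(z n)` since `F n s ≤ s`.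
  obtain ⟨hint, hle⟩ := integrable_and_integral_le_of_tendsto
    (hP.mono fun s hs ↦ tendsto_of_sub_mul_le_of_le hz0 (fun n ↦ hF_ge n s hs) (fun n ↦ hF_le n s))
    hF_int hF0 hF_up
  have hlow : Tendsto (fun n ↦ t - z n * ((t * σ2 + t ^ 2) / 2)) atTop (𝓝 t) := by
    simpa using (hz0.mul_const ((t * σ2 + t ^ 2) / 2)).const_sub t
  exact ⟨hint, le_antisymm hle (le_of_tendsto' hlow fun n ↦
    (hF_low n).trans (integral_mono (hF_int n) hint (hF_le n)))⟩

theorem integrable_sq_and_integral_sq_le_of_laplace [IsProbabilityMeasure P] {φ : ℝ → ℝ}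
    {t σ2 : ℝ} (ht : 0 ≤ t) (hP : ∀ᵐ s ∂P, 0 ≤ s) (hφ0 : ∀ z, 0 ≤ z → 0 ≤ φ z)
    (hφz : ∀ z, 0 ≤ z → φ z ≤ z) (hφσ : ∀ z, 0 ≤ z → z - φ z ≤ σ2 / 2 * z ^ 2)
    (hL : ∀ z, 0 ≤ z → ∫ s, Real.exp (-(z * s)) ∂P = Real.exp (-(t * φ z))) :
    Integrable (fun s ↦ s ^ 2) P ∧ ∫ s, s ^ 2 ∂P ≤ t ^ 2 + t * σ2 := by
  obtain ⟨hid, hmean⟩ := integrable_id_and_integral_id_eq_of_laplace ht hP hφ0 hφz hφσ hL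
  set z : ℕ → ℝ := fun n ↦ 1 / ((n : ℝ) + 1)
  have hz : ∀ n, 0 < z n := fun n ↦ by positivity
  have hz0 : Tendsto z atTop (𝓝 0) := tendsto_one_div_add_atTop_nhds_zero_nat
  set K : ℕ → ℝ → ℝ := fun n s ↦ 2 * (Real.exp (-(z n * s)) - 1 + z n * s) / z n ^ 2
  have hK_le : ∀ n s, 0 ≤ s → K n s ≤ s ^ 2 := fun n s hs ↦ by
    rw [div_le_iff₀ (by positivity)]
    nlinarith [Real.exp_neg_le_one_sub_add_sq_div_two (mul_nonneg (hz n).le hs)]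
  have hK_ge : ∀ n s, 0 ≤ s → s ^ 2 - z n * (s ^ 3 / 3) ≤ K n s := fun n s hs ↦ by
    rw [le_div_iff₀ (by positivity)]
    nlinarith [Real.one_sub_add_sq_div_two_sub_cube_div_six_le_exp_neg (mul_nonneg (hz n).le hs)]
  have hK0 : ∀ n, 0 ≤ᵐ[P] K n := fun n ↦ by
    filter_upwards [hP] with s hs
    exact div_nonneg (by linarith [Real.one_sub_le_exp_neg (z n * s)]) (by positivity)
  have he : ∀ n, Integrable (fun s ↦ Real.exp (-(z n * s)) - 1) P := fun n ↦
    (integrable_exp_neg_mul hP (hz n).le).sub (integrable_const 1)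
  have hK_int : ∀ n, Integrable (K n) P := fun n ↦
    (((he n).add (hid.const_mul (z n))).const_mul 2).div_const _
  have hK_eq : ∀ n, ∫ s, K n s ∂P = 2 * (Real.exp (-(t * φ (z n))) - 1 + z n * t) / z n ^ 2 :=
    fun n ↦ by
    rw [integral_div, integral_const_mul, integral_add (he n) (hid.const_mul (z n)),
      integral_sub (integrable_exp_neg_mul hP (hz n).le) (integrable_const 1), integral_const_mul,
      hL _ (hz n).le, hmean, integral_const, probReal_univ, one_smul]
  have hK_up : ∀ n, ∫ s, K n s ∂P ≤ t ^ 2 + t * σ2 := fun n ↦ by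
    have hy0 : 0 ≤ t * φ (z n) := mul_nonneg ht (hφ0 _ (hz n).le)
    have hyz : t * φ (z n) ≤ t * z n := by gcongr; exact hφz _ (hz n).le
    have hyσ : t * (z n - φ (z n)) ≤ t * (σ2 / 2 * z n ^ 2) := by gcongr; exact hφσ _ (hz n).le
    rw [hK_eq, div_le_iff₀ (by positivity)]
    nlinarith [Real.exp_neg_le_one_sub_add_sq_div_two hy0]
  exact integrable_and_integral_le_of_tendsto (hP.mono fun s hs ↦
    tendsto_of_sub_mul_le_of_le hz0 (fun n ↦ hK_ge n s hs) (fun n ↦ hK_le n s hs)) hK_int hK0 hK_up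

theorem integrable_and_integral_sub_sq_le_of_laplace [IsProbabilityMeasure P] {φ : ℝ → ℝ}
    {t σ2 : ℝ} (ht : 0 ≤ t) (hP : ∀ᵐ s ∂P, 0 ≤ s) (hφ0 : ∀ z, 0 ≤ z → 0 ≤ φ z)
    (hφz : ∀ z, 0 ≤ z → φ z ≤ z) (hφσ : ∀ z, 0 ≤ z → z - φ z ≤ σ2 / 2 * z ^ 2)
    (hL : ∀ z, 0 ≤ z → ∫ s, Real.exp (-(z * s)) ∂P = Real.exp (-(t * φ z))) :
    Integrable (fun s ↦ (s - t) ^ 2) P ∧ ∫ s, (s - t) ^ 2 ∂P ≤ t * σ2 := by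
  obtain ⟨hid, hmean⟩ := integrable_id_and_integral_id_eq_of_laplace ht hP hφ0 hφz hφσ hL
  obtain ⟨hsq, hsq_le⟩ := integrable_sq_and_integral_sq_le_of_laplace ht hP hφ0 hφz hφσ hL
  have hexp : (fun s ↦ (s - t) ^ 2) = fun s ↦ s ^ 2 - 2 * t * s + t ^ 2 := by ext s; ring
  have hint : Integrable (fun s ↦ s ^ 2 - 2 * t * s) P := hsq.sub (hid.const_mul _)
  refine ⟨hexp ▸ hint.add (integrable_const _), ?_⟩
  rw [hexp, integral_add hint (integrable_const _), integral_sub hsq (hid.const_mul _),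
    integral_const_mul, hmean, integral_const, probReal_univ, one_smul]
  linarith

theorem moments_of_laplace_bernsteinFunction {P μ : Measure ℝ} [IsProbabilityMeasure P]
    {b t : ℝ} (ht : 0 ≤ t) (hb : 0 ≤ b) (hμ1 : IntegrableOn (fun s : ℝ ↦ s) (Ioi 0) μ)
    (hμ2 : IntegrableOn (fun s : ℝ ↦ s ^ 2) (Ioi 0) μ) (hmom : b + ∫ s in Ioi 0, s ∂μ = 1)
    (hP : ∀ᵐ s ∂P, 0 ≤ s) (hL : ∀ z, 0 ≤ z →
      ∫ s, Real.exp (-(z * s)) ∂P = Real.exp (-(t * bernsteinFunction b μ z))) :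
    (Integrable (fun s ↦ s) P ∧ ∫ s, s ∂P = t) ∧
      Integrable (fun s ↦ (s - t) ^ 2) P ∧ ∫ s, (s - t) ^ 2 ∂P ≤ t * ∫ s in Ioi 0, s ^ 2 ∂μ := by
  have hφ0 := fun z (hz : (0 : ℝ) ≤ z) ↦ bernsteinFunction_nonneg (μ := μ) hb hz
  have hφz := fun z (hz : (0 : ℝ) ≤ z) ↦ bernsteinFunction_le hμ1 hmom hz
  have hφσ := fun z (hz : (0 : ℝ) ≤ z) ↦ sub_bernsteinFunction_le hμ1 hμ2 hmom hz
  exact ⟨integrable_id_and_integral_id_eq_of_laplace ht hP hφ0 hφz hφσ hL,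
    integrable_and_integral_sub_sq_le_of_laplace ht hP hφ0 hφz hφσ hL⟩

end Laplace

theorem norm_sub_integral_le_of_norm_sub_sub_smul_le {E : Type*} [NormedAddCommGroup E]
    [NormedSpace ℝ E] [CompleteSpace E] {P : Measure ℝ} [IsProbabilityMeasure P] {f : ℝ → E}
    {v : E} {t C : ℝ}
    (hf : Integrable f P) (hid : Integrable (fun s ↦ s) P) (hmean : ∫ s, s ∂P = t)
    (hsq : Integrable (fun s ↦ (s - t) ^ 2) P)
    (hR : ∀ᵐ s ∂P, ‖f t - f s - (s - t) • v‖ ≤ C * (s - t) ^ 2) :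
    ‖f t - ∫ s, f s ∂P‖ ≤ C * ∫ s, (s - t) ^ 2 ∂P := by
  have hlin : Integrable (fun s ↦ (s - t) • v) P := (hid.sub (integrable_const t)).smul_const v
  have hmean0 : ∫ s, (s - t) • v ∂P = 0 := by
    rw [integral_smul_const, integral_sub hid (integrable_const t), hmean, integral_const,
      probReal_univ, one_smul, sub_self, zero_smul]
  have hdiff : Integrable (fun s ↦ f t - f s) P := (integrable_const _).sub hf
  have hrepr : f t - ∫ s, f s ∂P = ∫ s, (f t - f s - (s - t) • v) ∂P := by
    rw [integral_sub hdiff hlin, hmean0, sub_zero,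
      integral_sub (integrable_const _) hf, integral_const, probReal_univ, one_smul]
  rw [hrepr, ← integral_const_mul]
  exact norm_integral_le_of_norm_le (hsq.const_mul C) hR

section Orbit

variable {E : Type*} [NormedAddCommGroup E] [NormedSpace ℝ E]

theorem norm_sub_le_of_mul_norm_deriv_le {g g' : ℝ → E} {B : ℝ}
    (hg : ∀ ρ, 0 < ρ → HasDerivAt g (g' ρ) ρ) (hB : ∀ ρ, 0 < ρ → ρ * ‖g' ρ‖ ≤ B)
    {a c : ℝ} (ha : 0 < a) (hac : a ≤ c) : ‖g c - g a‖ ≤ B / a * (c - a) := by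
  have hB0 : 0 ≤ B := (mul_nonneg ha.le (norm_nonneg _)).trans (hB a ha)
  refine norm_image_sub_le_of_norm_deriv_le_segment'
    (fun ρ hρ ↦ (hg ρ (ha.trans_le hρ.1)).hasDerivWithinAt) (fun ρ hρ ↦ ?_) c ⟨hac, le_rfl⟩
  have hρ0 : 0 < ρ := ha.trans_le hρ.1
  calc ‖g' ρ‖ ≤ B / ρ := by rw [le_div_iff₀ hρ0, mul_comm]; exact hB ρ hρ0
    _ ≤ B / a := div_le_div_of_nonneg_left hB0 ha hρ.1

/-- The factor `2` comes from `ρ ≥ t / 2`, where the derivative bound is used; for `ρ < t / 2`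
the crude bound `2A` is absorbed since `t - ρ > t / 2`. -/
theorem norm_sub_le_mul_abs_sub_of_norm_le {g g' : ℝ → E} {A B t ρ : ℝ} (ht : 0 < t)
    (hA : ∀ ρ, 0 ≤ ρ → ‖g ρ‖ ≤ A) (hg : ∀ ρ, 0 < ρ → HasDerivAt g (g' ρ) ρ)
    (hB : ∀ ρ, 0 < ρ → ρ * ‖g' ρ‖ ≤ B) (hρ : 0 ≤ ρ) :
    ‖g ρ - g t‖ ≤ 2 * (2 * A + B) / t * |ρ - t| := by
  have hA0 : 0 ≤ A := (norm_nonneg _).trans (hA t ht.le)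
  have hB0 : 0 ≤ B := (mul_nonneg ht.le (norm_nonneg _)).trans (hB t ht)
  rcases le_or_gt t ρ with htρ | hρt
  · rw [abs_of_nonneg (sub_nonneg.2 htρ)]
    calc ‖g ρ - g t‖ ≤ B / t * (ρ - t) := norm_sub_le_of_mul_norm_deriv_le hg hB ht htρ
      _ ≤ 2 * (2 * A + B) / t * (ρ - t) := by gcongr; linarith
  rw [abs_of_neg (sub_neg.2 hρt), neg_sub]
  rcases le_or_gt (t / 2) ρ with hρ2 | hρ2
  · rw [norm_sub_rev]
    calc ‖g t - g ρ‖ ≤ B / ρ * (t - ρ) :=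
          norm_sub_le_of_mul_norm_deriv_le hg hB (by linarith) hρt.le
      _ ≤ 2 * (2 * A + B) / t * (t - ρ) := by
        gcongr ?_ * _
        rw [div_le_div_iff₀ (by linarith) ht]
        nlinarith
  · calc ‖g ρ - g t‖ ≤ ‖g ρ‖ + ‖g t‖ := norm_sub_le _ _
      _ ≤ 2 * (2 * A + B) / t * (t - ρ) := by
        rw [div_mul_eq_mul_div, le_div_iff₀ ht]
        nlinarith [hA ρ hρ, hA t ht.le]

theorem norm_intervalIntegral_le_of_norm_le_mul_abs_sub {G : ℝ → E} {L t s : ℝ}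
    (hGL : ∀ ρ ∈ Ι t s, ‖G ρ‖ ≤ L * |ρ - t|) : ‖∫ ρ in t..s, G ρ‖ ≤ L / 2 * (s - t) ^ 2 := by
  rw [intervalIntegral.norm_integral_eq_norm_integral_uIoc]
  calc ‖∫ ρ in Ι t s, G ρ‖ ≤ ∫ ρ in Ι t s, L * |ρ - t| ^ 1 :=
        norm_integral_le_of_norm_le (Continuous.integrableOn_uIoc (by fun_prop))
          ((ae_restrict_mem measurableSet_uIoc).mono fun ρ hρ ↦ by simpa using hGL ρ hρ)
    _ = L / 2 * (s - t) ^ 2 := by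
      rw [integral_const_mul, integral_pow_abs_sub_uIoc, sq_abs]
      ring

theorem sub_sub_smul_eq_intervalIntegral [CompleteSpace E] {f g : ℝ → E} {x : E}
    (hg : ContinuousOn g (Ici 0))
    (hf : ∀ r, 0 ≤ r → f r = x - ∫ ρ in 0..r, g ρ) {s t : ℝ} (hs : 0 ≤ s) (ht : 0 ≤ t) :
    f t - f s - (s - t) • g t = ∫ ρ in t..s, (g ρ - g t) := by
  have hint : ∀ r, 0 ≤ r → IntervalIntegrable g volume 0 r := fun r hr ↦
    (hg.mono (by rw [uIcc_of_le hr]; exact Icc_subset_Ici_self)).intervalIntegrable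
  rw [intervalIntegral.integral_sub ((hint t ht).symm.trans (hint s hs)) intervalIntegrable_const,
    intervalIntegral.integral_const, ← intervalIntegral.integral_interval_sub_left (hint s hs)
    (hint t ht), hf t ht, hf s hs]
  abel

theorem norm_sub_sub_smul_le_of_eq_sub_integral [CompleteSpace E] {f g g' : ℝ → E} {x : E}
    {A B s t : ℝ} (hs : 0 ≤ s) (ht : 0 < t) (hgc : ContinuousOn g (Ici 0))
    (hf : ∀ r, 0 ≤ r → f r = x - ∫ ρ in 0..r, g ρ) (hA : ∀ ρ, 0 ≤ ρ → ‖g ρ‖ ≤ A)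
    (hg : ∀ ρ, 0 < ρ → HasDerivAt g (g' ρ) ρ) (hB : ∀ ρ, 0 < ρ → ρ * ‖g' ρ‖ ≤ B) :
    ‖f t - f s - (s - t) • g t‖ ≤ (2 * A + B) / t * (s - t) ^ 2 := by
  rw [sub_sub_smul_eq_intervalIntegral hgc hf hs ht.le]
  refine (norm_intervalIntegral_le_of_norm_le_mul_abs_sub fun ρ hρ ↦
    norm_sub_le_mul_abs_sub_of_norm_le ht hA hg hB ?_).trans_eq (by ring)
  exact (le_min ht.le hs).trans hρ.1.le

end Orbit

theorem statement12_general {X : Type*} [NormedAddCommGroup X] [NormedSpace ℂ X] [CompleteSpace X]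
    (T : ℝ → X →L[ℂ] X) (M₀ M₁ : ℝ)
    (hTcont : ∀ x : X, ContinuousOn (fun t => T t x) (Ici 0))
    (hM0 : ∀ t : ℝ, 0 ≤ t → ‖T t‖ ≤ M₀)
    (D : ℝ → X →L[ℂ] X)
    (hD : ∀ x : X, ∀ t : ℝ, 0 < t → HasDerivAt (fun r => T r x) (-(D t x)) t)
    (hM1 : ∀ t : ℝ, 0 < t → t * ‖D t‖ ≤ M₁)
    (b : ℝ) (hb : 0 ≤ b) (μ : Measure ℝ)
    (hμ1 : IntegrableOn (fun s : ℝ => s) (Ioi 0) μ)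
    (hμ2 : IntegrableOn (fun s : ℝ => s ^ 2) (Ioi 0) μ)
    (hmom : b + ∫ s in Ioi (0:ℝ), s ∂μ = 1)
    (ν : ℝ → Measure ℝ)
    (hνL : ∀ r : ℝ, 0 ≤ r → ∀ z : ℂ, 0 ≤ z.re →
      (∫ s in Ici (0:ℝ), Complex.exp (-z * s) ∂ν r) =
        Complex.exp (-(r:ℂ) *
          ((b:ℂ) * z + ∫ s in Ioi (0:ℝ), (1 - Complex.exp (-z * s)) ∂μ)))
    (t : ℝ) (ht : 0 < t) (x u : X)
    (hxu : ∀ r : ℝ, 0 ≤ r → T r x = x - ∫ ρ in (0:ℝ)..r, T ρ u) :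
    ‖T t x - ∫ s in Ici (0:ℝ), T s x ∂ν t‖ ≤
      (2 * M₀ + M₁) * (∫ s in Ioi (0:ℝ), s ^ 2 ∂μ) * ‖u‖ := by
  have hM₀ : 0 ≤ M₀ := (norm_nonneg _).trans (hM0 0 le_rfl)
  have hM₁ : 0 ≤ M₁ := (by positivity : (0 : ℝ) ≤ 1 * ‖D 1‖).trans (hM1 1 one_pos)
  set P := (ν t).restrict (Ici 0)
  set σ2 := ∫ s in Ioi (0:ℝ), s ^ 2 ∂μ
  have hP : ∀ᵐ s ∂P, 0 ≤ s := ae_restrict_mem measurableSet_Ici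
  have hL : ∀ z : ℝ, 0 ≤ z →
      ∫ s, Real.exp (-(z * s)) ∂P = Real.exp (-(t * bernsteinFunction b μ z)) := fun z hz ↦
    integral_exp_neg_mul_eq_of_complex (hνL t ht.le z (by simpa using hz))
  have : IsProbabilityMeasure P :=
    isProbabilityMeasure_of_integral_one (by simpa [bernsteinFunction] using hL 0 le_rfl)
  obtain ⟨⟨hid, hmean⟩, hsq, hvar⟩ :=
    moments_of_laplace_bernsteinFunction ht.le hb hμ1 hμ2 hmom hP hL
  have hR : ∀ s, 0 ≤ s → ‖T t x - T s x - (s - t) • T t u‖ ≤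
      (2 * (M₀ * ‖u‖) + M₁ * ‖u‖) / t * (s - t) ^ 2 := fun s hs ↦
    norm_sub_sub_smul_le_of_eq_sub_integral hs ht (hTcont u) hxu
      (fun ρ hρ ↦ (T ρ).le_of_opNorm_le (hM0 ρ hρ) u) (fun ρ hρ ↦ hD u ρ hρ) fun ρ hρ ↦ by
      rw [norm_neg]
      exact (mul_le_mul_of_nonneg_left ((D ρ).le_opNorm u) hρ.le).trans (by
        rw [← mul_assoc]; exact mul_le_mul_of_nonneg_right (hM1 ρ hρ) (norm_nonneg u))
  have hTx : Integrable (fun s ↦ T s x) P :=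
    (integrable_const (M₀ * ‖x‖)).mono' ((hTcont x).aestronglyMeasurable measurableSet_Ici)
      (hP.mono fun s hs ↦ (T s).le_of_opNorm_le (hM0 s hs) x)
  calc ‖T t x - ∫ s, T s x ∂P‖
      ≤ (2 * (M₀ * ‖u‖) + M₁ * ‖u‖) / t * ∫ s, (s - t) ^ 2 ∂P :=
        norm_sub_integral_le_of_norm_sub_sub_smul_le hTx hid hmean hsq (hP.mono hR)
    _ ≤ (2 * (M₀ * ‖u‖) + M₁ * ‖u‖) / t * (t * σ2) := by gcongr
    _ = (2 * M₀ + M₁) * σ2 * ‖u‖ := by field_simp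

/-- Theorem 6.4: for a bounded analytic `C₀`-semigroup `T` (encoded by `‖T(t)‖ ≤ M₀`,
`D(t) = A T(t)` with `d/dt T(t)x = -D(t)x` and `t‖D(t)‖ ≤ M₁`), `φ ∈ Φ` with Lévy data
`(b, μ)` and `σ² = ∫ s² dμ`, subordination measures `ν_t`, and `x ∈ dom(A)` (witnessed by
`u = Ax`), one has `‖T(t)x - e^(-tφ(A))x‖ ≤ (2M₀ + M₁) σ² ‖u‖` for all `t > 0`. -/
theorem statement12 {X : Type*} [NormedAddCommGroup X] [NormedSpace ℂ X] [CompleteSpace X]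
    (T : ℝ → X →L[ℂ] X) (M₀ M₁ : ℝ)
    (hT0 : T 0 = 1)
    (hTadd : ∀ s t : ℝ, 0 ≤ s → 0 ≤ t → T (s + t) = (T s).comp (T t))
    (hTcont : ∀ x : X, ContinuousOn (fun t => T t x) (Ici 0))
    (hM0 : ∀ t : ℝ, 0 ≤ t → ‖T t‖ ≤ M₀)
    (D : ℝ → X →L[ℂ] X)
    (hD : ∀ x : X, ∀ t : ℝ, 0 < t → HasDerivAt (fun r => T r x) (-(D t x)) t)
    (hM1 : ∀ t : ℝ, 0 < t → t * ‖D t‖ ≤ M₁)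
    (b : ℝ) (hb : 0 ≤ b) (μ : Measure ℝ)
    (hμ1 : IntegrableOn (fun s : ℝ => s) (Ioi 0) μ)
    (hμ2 : IntegrableOn (fun s : ℝ => s ^ 2) (Ioi 0) μ)
    (hmom : b + ∫ s in Ioi (0:ℝ), s ∂μ = 1)
    (ν : ℝ → Measure ℝ)
    (hνsupp : ∀ r : ℝ, 0 ≤ r → (ν r) (Iio 0) = 0)
    (hνsub : ∀ r : ℝ, 0 ≤ r → (ν r) univ ≤ 1)
    (hνL : ∀ r : ℝ, 0 ≤ r → ∀ z : ℂ, 0 ≤ z.re →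
      (∫ s in Ici (0:ℝ), Complex.exp (-z * s) ∂ν r) =
        Complex.exp (-(r:ℂ) *
          ((b:ℂ) * z + ∫ s in Ioi (0:ℝ), (1 - Complex.exp (-z * s)) ∂μ)))
    (t : ℝ) (ht : 0 < t) (x u : X)
    (hxu : ∀ r : ℝ, 0 ≤ r → T r x = x - ∫ ρ in (0:ℝ)..r, T ρ u) :
    ‖T t x - ∫ s in Ici (0:ℝ), T s x ∂ν t‖ ≤
      (2 * M₀ + M₁) * (∫ s in Ioi (0:ℝ), s ^ 2 ∂μ) * ‖u‖ :=
  statement12_general T M₀ M₁ hTcont hM0 D hD hM1 b hb μ hμ1 hμ2 hmom ν hνL t ht x u hxu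
end
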